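/- Let Q, X, S be finite-valued random variables such that X and S are conditionally independent given Q, let g be a function on the alphabet of X, and let Y = f(g(X), S) where f is one-to-one in each argument. Then I(X;Y|Q) ≤ H(g(X)|Q). -/
import Mathlib


open scoped Classical
open Finset

/-- A probability mass function on a finite sample space, given as a real-valued
weight function that is nonnegative and sums to one. -/
structure FinPMF (Ω : Type) where
  [fin : Fintype Ω]
  p : Ω → ℝ
  nonneg : ∀ ω, 0 ≤ p ω
  sum_one : ∑ ω, p ω = 1

/-- Probability of an event. -/
noncomputable def prE {Ω : Type} (μ : FinPMF Ω) (E : Ω → Prop) : ℝ :=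
  letI := μ.fin
  ∑ ω, if E ω then μ.p ω else 0

/-- Probability that the random variable `X` takes the value `x`. -/
noncomputable def prX {Ω α : Type} (μ : FinPMF Ω) (X : Ω → α) (x : α) : ℝ :=
  prE μ (fun ω => X ω = x)

/-- Shannon entropy (base 2) of a random variable on a finite probability space. -/
noncomputable def entH {Ω α : Type} (μ : FinPMF Ω) (X : Ω → α) : ℝ :=
  letI := μ.fin;
  -∑ x ∈ Finset.univ.image X, prX μ X x * Real.logb 2 (prX μ X x)

/-- Conditional entropy `H(X | Y)` (base 2). -/
noncomputable def condH {Ω α β : Type} (μ : FinPMF Ω) (X : Ω → α) (Y : Ω → β) : ℝ :=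
  entH μ (fun ω => (X ω, Y ω)) - entH μ Y

/-- Conditional mutual information `I(X ; Y | Q)` (base 2). -/
noncomputable def condMI {Ω α β γ : Type} (μ : FinPMF Ω) (X : Ω → α) (Y : Ω → β)
    (Q : Ω → γ) : ℝ :=
  condH μ X Q + condH μ Y Q - condH μ (fun ω => (X ω, Y ω)) Q

/-- A two-argument function is one-to-one in each argument. -/
def OneToOne {A B C : Type} (f : A → B → C) : Prop :=
  (∀ b, Function.Injective fun a => f a b) ∧ ∀ a, Function.Injective (f a)

/-- Conditional pmf `p_{X|U}(x|u)`. -/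
noncomputable def condP {Ω α γ : Type} (μ : FinPMF Ω) (X : Ω → α) (U : Ω → γ)
    (x : α) (u : γ) : ℝ :=
  prE μ (fun ω => X ω = x ∧ U ω = u) / prX μ U u

/-- Independence of two random variables. -/
def IndepFun {Ω α β : Type} (μ : FinPMF Ω) (X : Ω → α) (S : Ω → β) : Prop :=
  ∀ x s, prE μ (fun ω => X ω = x ∧ S ω = s) = prX μ X x * prX μ S s

/-- Conditional independence of `A` and `B` given `Z`:
for every `z` with `P(Z = z) > 0`, `P(A = a, B = b | Z = z) = P(A = a | Z = z) P(B = b | Z = z)`. -/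
def CondIndepFun {Ω α β γ : Type} (μ : FinPMF Ω) (A : Ω → α) (B : Ω → β) (Z : Ω → γ) : Prop :=
  ∀ a b z, 0 < prX μ Z z →
    prE μ (fun ω => A ω = a ∧ B ω = b ∧ Z ω = z) / prX μ Z z =
      (prE μ (fun ω => A ω = a ∧ Z ω = z) / prX μ Z z) *
        (prE μ (fun ω => B ω = b ∧ Z ω = z) / prX μ Z z)

/-- Mutual conditional independence of `X₁, X₂, X₃` given `Q`: the joint conditional pmf
factors into the product of the conditional marginals. -/
def CondIndepFun3 {Ω α₁ α₂ α₃ γ : Type} (μ : FinPMF Ω)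
    (X₁ : Ω → α₁) (X₂ : Ω → α₂) (X₃ : Ω → α₃) (Q : Ω → γ) : Prop :=
  ∀ x₁ x₂ x₃ q, 0 < prX μ Q q →
    prE μ (fun ω => X₁ ω = x₁ ∧ X₂ ω = x₂ ∧ X₃ ω = x₃ ∧ Q ω = q) / prX μ Q q =
      (prE μ (fun ω => X₁ ω = x₁ ∧ Q ω = q) / prX μ Q q) *
        (prE μ (fun ω => X₂ ω = x₂ ∧ Q ω = q) / prX μ Q q) *
        (prE μ (fun ω => X₃ ω = x₃ ∧ Q ω = q) / prX μ Q q)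

/-- The ε-typical set (sequences whose empirical pmf is within a relative ε of `p`). -/
def Typical {𝒳 : Type} [Fintype 𝒳] (p : 𝒳 → ℝ) (ε : ℝ) (n : ℕ) (xs : Fin n → 𝒳) : Prop :=
  ∀ x : 𝒳, |((Finset.univ.filter fun i => xs i = x).card : ℝ) / n - p x| ≤ ε * p x

/-- The number of codewords `⌈2^{nR}⌉` at rate `R` and blocklength `n`. -/
noncomputable def codeSize (R : ℝ) (n : ℕ) : ℕ := ⌈(2 : ℝ) ^ ((n : ℝ) * R)⌉₊

section Helpers

variable {Ω α β γ : Type}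

lemma prE_congr (μ : FinPMF Ω) {E F : Ω → Prop} (h : ∀ ω, E ω ↔ F ω) :
    prE μ E = prE μ F := by
  letI := μ.fin
  unfold prE
  exact Finset.sum_congr rfl fun ω _ => by rw [show E ω = F ω from propext (h ω)]

lemma prE_mono (μ : FinPMF Ω) {E F : Ω → Prop} (h : ∀ ω, E ω → F ω) :
    prE μ E ≤ prE μ F := by
  letI := μ.fin
  unfold prE
  apply Finset.sum_le_sum
  intro ω _
  by_cases hE : E ω
  · simp [hE, h ω hE]
  · simp only [hE, if_false]
    split_ifs <;> simp [μ.nonneg ω]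

lemma prE_pos (μ : FinPMF Ω) {E : Ω → Prop} {ω₀ : Ω} (hp : 0 < μ.p ω₀) (hE : E ω₀) :
    0 < prE μ E := by
  letI := μ.fin
  unfold prE
  have h1 : (if E ω₀ then μ.p ω₀ else 0) = μ.p ω₀ := by simp [hE]
  calc (0:ℝ) < μ.p ω₀ := hp
    _ = (if E ω₀ then μ.p ω₀ else 0) := h1.symm
    _ ≤ _ := by
        apply Finset.single_le_sum (f := fun ω => if E ω then μ.p ω else 0)
        · intro ω _; split_ifs <;> simp [μ.nonneg ω]
        · exact Finset.mem_univ ω₀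

lemma prX_pair (μ : FinPMF Ω) (A : Ω → α) (Q : Ω → γ) (a : α) (q : γ) :
    prX μ (fun ω => (A ω, Q ω)) (a, q) = prE μ (fun ω => A ω = a ∧ Q ω = q) := by
  unfold prX
  exact prE_congr μ fun ω => by simp [Prod.ext_iff]

lemma prX_triple (μ : FinPMF Ω) (A : Ω → α) (B : Ω → β) (Q : Ω → γ) (a : α) (b : β) (q : γ) :
    prX μ (fun ω => ((A ω, B ω), Q ω)) ((a, b), q)
      = prE μ (fun ω => A ω = a ∧ B ω = b ∧ Q ω = q) := by
  unfold prX
  exact prE_congr μ fun ω => by simp [Prod.ext_iff]; tauto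

lemma prX_apply_le (μ : FinPMF Ω) (W : Ω → α) (V : Ω → β) (φ : α → β)
    (hV : ∀ ω, V ω = φ (W ω)) (w : α) : prX μ W w ≤ prX μ V (φ w) := by
  apply prE_mono
  intro ω h
  rw [hV ω, h]

lemma prX_apply_eq (μ : FinPMF Ω) (W : Ω → α) (V : Ω → β) (φ : α → β)
    (hφ : Function.Injective φ) (hV : ∀ ω, V ω = φ (W ω)) (ω₀ : Ω) :
    prX μ V (V ω₀) = prX μ W (W ω₀) := by
  apply prE_congr
  intro ω
  rw [hV ω, hV ω₀]
  exact ⟨fun h => hφ h, fun h => by rw [h]⟩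

lemma entH_omega (μ : FinPMF Ω) (W : Ω → α) :
    entH μ W = -(letI := μ.fin; ∑ ω, μ.p ω * Real.logb 2 (prX μ W (W ω))) := by
  letI := μ.fin
  unfold entH
  rw [neg_inj]
  have h1 : ∀ x, prX μ W x * Real.logb 2 (prX μ W x)
      = ∑ ω, (if W ω = x then μ.p ω * Real.logb 2 (prX μ W x) else 0) := by
    intro x
    rw [show prX μ W x = ∑ ω, (if W ω = x then μ.p ω else 0) from rfl, Finset.sum_mul]
    exact Finset.sum_congr rfl fun ω _ => by split_ifs <;> simp
  calc ∑ x ∈ Finset.univ.image W, prX μ W x * Real.logb 2 (prX μ W x)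
      = ∑ x ∈ Finset.univ.image W, ∑ ω, (if W ω = x then μ.p ω * Real.logb 2 (prX μ W x) else 0) := by
        exact Finset.sum_congr rfl fun x _ => h1 x
    _ = ∑ ω, ∑ x ∈ Finset.univ.image W, (if W ω = x then μ.p ω * Real.logb 2 (prX μ W x) else 0) :=
        Finset.sum_comm
    _ = ∑ ω, μ.p ω * Real.logb 2 (prX μ W (W ω)) := by
        apply Finset.sum_congr rfl
        intro ω _
        rw [Finset.sum_ite_eq]
        simp [Finset.mem_image]

end Helpers

section Helpers2

variable {Ω α β γ : Type}

lemma myDivHelper {p q r z : ℝ} (hz : z ≠ 0) (h : p / z = q / z * (r / z)) :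
    p = q * r / z := by
  have hp : p = p / z * z := by field_simp
  rw [hp, h]
  field_simp

lemma entH_comp_le (μ : FinPMF Ω) (W : Ω → α) (V : Ω → β) (φ : α → β)
    (hV : ∀ ω, V ω = φ (W ω)) : entH μ V ≤ entH μ W := by
  letI := μ.fin
  rw [entH_omega, entH_omega, neg_le_neg_iff]
  apply Finset.sum_le_sum
  intro ω _
  rcases eq_or_lt_of_le (μ.nonneg ω) with h0 | h0
  · simp [← h0]
  · have h1 : 0 < prX μ W (W ω) := prE_pos μ h0 rfl
    have h2 : prX μ W (W ω) ≤ prX μ V (V ω) := by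
      rw [hV ω]; exact prX_apply_le μ W V φ hV (W ω)
    have h3 : Real.logb 2 (prX μ W (W ω)) ≤ Real.logb 2 (prX μ V (V ω)) :=
      Real.logb_le_logb_of_le one_lt_two h1 h2
    exact mul_le_mul_of_nonneg_left h3 (le_of_lt h0)

lemma entH_comp_inj (μ : FinPMF Ω) (W : Ω → α) (V : Ω → β) (φ : α → β)
    (hφ : Function.Injective φ) (hV : ∀ ω, V ω = φ (W ω)) : entH μ V = entH μ W := by
  letI := μ.fin
  rw [entH_omega, entH_omega, neg_inj]
  exact Finset.sum_congr rfl fun ω _ => by rw [prX_apply_eq μ W V φ hφ hV ω]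

lemma entH_condIndep (μ : FinPMF Ω) (A : Ω → α) (B : Ω → β) (Q : Ω → γ)
    (h : CondIndepFun μ A B Q) :
    entH μ (fun ω => ((A ω, B ω), Q ω)) + entH μ Q
      = entH μ (fun ω => (A ω, Q ω)) + entH μ (fun ω => (B ω, Q ω)) := by
  letI := μ.fin
  rw [entH_omega, entH_omega, entH_omega, entH_omega, ← neg_add, ← neg_add, neg_inj,
    ← Finset.sum_add_distrib, ← Finset.sum_add_distrib]
  apply Finset.sum_congr rfl
  intro ω _
  rcases eq_or_lt_of_le (μ.nonneg ω) with h0 | h0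
  · simp [← h0]
  · have hq : 0 < prX μ Q (Q ω) := prE_pos μ h0 rfl
    have hAQ : 0 < prE μ (fun ω' => A ω' = A ω ∧ Q ω' = Q ω) := prE_pos μ h0 ⟨rfl, rfl⟩
    have hBQ : 0 < prE μ (fun ω' => B ω' = B ω ∧ Q ω' = Q ω) := prE_pos μ h0 ⟨rfl, rfl⟩
    have key := h (A ω) (B ω) (Q ω) hq
    have hABQ : prE μ (fun ω' => A ω' = A ω ∧ B ω' = B ω ∧ Q ω' = Q ω)
        = prE μ (fun ω' => A ω' = A ω ∧ Q ω' = Q ω)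
          * prE μ (fun ω' => B ω' = B ω ∧ Q ω' = Q ω) / prX μ Q (Q ω) :=
      myDivHelper hq.ne' key
    rw [prX_triple μ A B Q, prX_pair μ A Q, prX_pair μ B Q, hABQ,
      Real.logb_div (by positivity) hq.ne', Real.logb_mul hAQ.ne' hBQ.ne']
    ring

lemma prE_fiber [Fintype α] (μ : FinPMF Ω) (W : Ω → α) (φ : α → β) (y : β) (R : Ω → Prop) :
    prE μ (fun ω => φ (W ω) = y ∧ R ω)
      = ∑ w : α, if φ w = y then prE μ (fun ω => W ω = w ∧ R ω) else 0 := by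
  letI := μ.fin
  have step : ∀ w : α, (if φ w = y then prE μ (fun ω => W ω = w ∧ R ω) else 0)
      = ∑ ω, (if W ω = w then (if φ w = y ∧ R ω then μ.p ω else 0) else 0) := by
    intro w
    by_cases hw : φ w = y
    · simp only [hw, if_true, prE]
      refine Finset.sum_congr rfl fun ω _ => ?_
      split_ifs with h1 h2 <;> tauto
    · simp only [hw, if_false]
      rw [eq_comm]
      apply Finset.sum_eq_zero
      intro ω _
      split_ifs with h1 h2
      · exact h2.1.elim
      · rfl
      · rfl
  calc prE μ (fun ω => φ (W ω) = y ∧ R ω)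
      = ∑ ω, ∑ w : α, (if W ω = w then (if φ w = y ∧ R ω then μ.p ω else 0) else 0) := by
        simp only [prE]
        refine Finset.sum_congr rfl fun ω _ => ?_
        rw [Finset.sum_ite_eq]
        simp
    _ = ∑ w : α, ∑ ω, (if W ω = w then (if φ w = y ∧ R ω then μ.p ω else 0) else 0) :=
        Finset.sum_comm
    _ = ∑ w : α, if φ w = y then prE μ (fun ω => W ω = w ∧ R ω) else 0 :=
        Finset.sum_congr rfl fun w _ => (step w).symm

lemma condIndep_comp {𝒳 𝒳' : Type} [Fintype 𝒳] (μ : FinPMF Ω) (X : Ω → 𝒳) (S : Ω → β)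
    (Q : Ω → γ) (g : 𝒳 → 𝒳') (h : CondIndepFun μ X S Q) :
    CondIndepFun μ (fun ω => g (X ω)) S Q := by
  intro a b z hz
  rw [prE_fiber μ X g a (fun ω => S ω = b ∧ Q ω = z),
    prE_fiber μ X g a (fun ω => Q ω = z)]
  have hstep : ∀ x : 𝒳,
      (if g x = a then prE μ (fun ω => X ω = x ∧ S ω = b ∧ Q ω = z) else 0)
      = (if g x = a then prE μ (fun ω => X ω = x ∧ Q ω = z) else 0)
        * (prE μ (fun ω => S ω = b ∧ Q ω = z) / prX μ Q z) := by
    intro x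
    split_ifs
    · rw [← mul_div_assoc]
      exact myDivHelper hz.ne' (h x b z hz)
    · simp
  rw [Finset.sum_congr rfl fun x _ => hstep x, ← Finset.sum_mul]
  field_simp

end Helpers2

/-- `I(X;Y|Q) ≤ H(g(X)|Q)` where `Y = f(g(X), S)`. -/
theorem condMI_le_condH_g
    {Ω 𝒬 𝒳 𝒳' 𝒮 𝒴 : Type} [Fintype 𝒬] [Nonempty 𝒬] [Fintype 𝒳] [Nonempty 𝒳]
    [Fintype 𝒳'] [Nonempty 𝒳'] [Fintype 𝒮] [Nonempty 𝒮] [Fintype 𝒴] [Nonempty 𝒴]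
    (μ : FinPMF Ω) (Q : Ω → 𝒬) (X : Ω → 𝒳) (S : Ω → 𝒮)
    (g : 𝒳 → 𝒳') (f : 𝒳' → 𝒮 → 𝒴)
    (hindep : CondIndepFun μ X S Q)
    (hf : OneToOne f) :
    condMI μ X (fun ω => f (g (X ω)) (S ω)) Q ≤ condH μ (fun ω => g (X ω)) Q := by
  have hXY : entH μ (fun ω => ((X ω, f (g (X ω)) (S ω)), Q ω))
      = entH μ (fun ω => ((X ω, S ω), Q ω)) := by
    apply entH_comp_inj μ _ _ (fun p : (𝒳 × 𝒮) × 𝒬 => ((p.1.1, f (g p.1.1) p.1.2), p.2))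
    · rintro ⟨⟨x, s⟩, q⟩ ⟨⟨x', s'⟩, q'⟩ hpp
      simp only [Prod.mk.injEq] at hpp
      obtain ⟨⟨hx, hfs⟩, hq⟩ := hpp
      subst hx; subst hq
      have hs : s = s' := hf.2 _ hfs
      subst hs; rfl
    · intro ω; rfl
  have hXS := entH_condIndep μ X S Q hindep
  have hgS := entH_condIndep μ (fun ω => g (X ω)) S Q (condIndep_comp μ X S Q g hindep)
  have hYle : entH μ (fun ω => (f (g (X ω)) (S ω), Q ω))
      ≤ entH μ (fun ω => ((g (X ω), S ω), Q ω)) :=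
    entH_comp_le μ _ _ (fun p : (𝒳' × 𝒮) × 𝒬 => (f p.1.1 p.1.2, p.2)) (fun ω => rfl)
  unfold condMI condH
  linarith [hXY, hXS, hgS, hYle]
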